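/- arXiv:math/0504604 — 2 statements merged into one kernel-verified Lean document; each statement's English description precedes it below -/
import Mathlib

section
/- Let D(z) = z^{α/2}φ(z)^{-α/2} and a(z) = (z-1)^{1/4} z^{-1/4}, and define the 2×2 matrix P^{(∞)}(z) = 2^{-ασ₃}·[[ (a+a^{-1})/2, (a-a^{-1})/(2i) ], [ -(a-a^{-1})/(2i), (a+a^{-1})/2 ]]·D(z)^{-σ₃} for z ∈ ℂ\[0,1], where σ₃ = diag(1,-1). Then det P^{(∞)}(z) = 1 for all z ∈ ℂ\[0,1], P^{(∞)}(z) → I as z → ∞, and the boundary values on (0,1) satisfy P^{(∞)}₊(x) = P^{(∞)}₋(x)·[[0, x^α],[-x^{-α}, 0]]. -/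
open Filter Matrix

/-- The conformal map `φ(z) = 2(z - 1/2) + 2 z^{1/2}(z-1)^{1/2}` (principal branches). -/
noncomputable def phiMap (z : ℂ) : ℂ :=
  2 * (z - 1/2) + 2 * z ^ ((1:ℂ)/2) * (z - 1) ^ ((1:ℂ)/2)

/-- The Szegő function `D(z) = z^{α/2} φ(z)^{-α/2}`. -/
noncomputable def szego (α : ℝ) (z : ℂ) : ℂ :=
  z ^ ((α : ℂ)/2) / (phiMap z) ^ ((α : ℂ)/2)

/-- The function `a(z) = (z-1)^{1/4}/z^{1/4}` (principal branches). -/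
noncomputable def aFun (z : ℂ) : ℂ := (z - 1) ^ ((1:ℂ)/4) / z ^ ((1:ℂ)/4)

/-- The outer parametrix
`P^{(∞)}(z) = 2^{-ασ₃} [[ (a+a⁻¹)/2, (a-a⁻¹)/(2i)],[-(a-a⁻¹)/(2i), (a+a⁻¹)/2]] D(z)^{-σ₃}`. -/
noncomputable def Pinfty (α : ℝ) (z : ℂ) : Matrix (Fin 2) (Fin 2) ℂ :=
  !![(2:ℂ) ^ (-α : ℂ), 0; 0, (2:ℂ) ^ (α : ℂ)] *
  !![(aFun z + (aFun z)⁻¹)/2, (aFun z - (aFun z)⁻¹)/(2*Complex.I);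
     -((aFun z - (aFun z)⁻¹)/(2*Complex.I)), (aFun z + (aFun z)⁻¹)/2] *
  !![(szego α z)⁻¹, 0; 0, szego α z]

/-- The segment `[0,1]` viewed as a subset of `ℂ`. -/
def unitSegment : Set ℂ := (fun x : ℝ => (x : ℂ)) '' Set.Icc 0 1

/-! On `(0, 1)` every principal power occurring in `P^{(∞)}` is continuous from the upper
half-plane, so `P^{(∞)}₊(x)` is just the principal-branch formula evaluated at `x`; off the real
axis all these functions commute with complex conjugation, so `P^{(∞)}₋(x)` is the same matrix
built from `conj a` and `conj D`. At such `x` the factor `(x - 1)^{1/4}` carries the phase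
`e^{iπ/4}`, whence `a₊ = i · conj a₊`, and `|φ₊(x)| = 1`, whence `D₊ · conj D₊ = x^α`; the jump
relation is then an algebraic identity for the matrix as a function of `a` and `D`, as are
`det = 1` and the normalisation at `a = 1`, `D = 2^{-α}`. At infinity the quotients
`(z - 1)^c / z^c` and `z^c / φ(z)^c` may be merged into `((z - 1)/z)^c` and `(z/φ(z))^c`,
because numerator and denominator lie in the same closed half-plane while the quotient has
positive real part; hence `a → 1` and `D → 4^{-α/2} = 2^{-α}`. -/

open Complex Bornology
open scoped ComplexConjugate Topology

namespace Complex

lemma log_div_of_zero_le_im_iff {u v : ℂ} (hu : u ≠ 0) (hv : v ≠ 0)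
    (him : 0 ≤ u.im ↔ 0 ≤ v.im) (hre : 0 < (u / v).re) :
    log (u / v) = log u - log v := by
  have hexp : exp (log u - log v - log (u / v)) = 1 := by
    rw [exp_sub, exp_sub, exp_log hu, exp_log hv, exp_log (div_ne_zero hu hv)]
    field_simp
  obtain ⟨n, hn⟩ := exp_eq_one_iff.mp hexp
  have harg : arg u - arg v - arg (u / v) = 2 * Real.pi * n := by
    simpa [log_im, mul_comm, mul_assoc] using congrArg im hn
  have hdiff : |arg u - arg v| ≤ Real.pi := by
    rw [abs_sub_le_iff]
    by_cases hu' : 0 ≤ u.im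
    · have := arg_nonneg_iff.mpr hu'
      have := arg_nonneg_iff.mpr (him.mp hu')
      constructor <;> linarith [arg_le_pi u, arg_le_pi v]
    · have := arg_neg_iff.mpr (not_le.mp hu')
      have := arg_neg_iff.mpr (not_le.mp (mt him.mpr hu'))
      constructor <;> linarith [neg_pi_lt_arg u, neg_pi_lt_arg v]
  have hquot : |arg (u / v)| < Real.pi / 2 := abs_arg_lt_pi_div_two_iff.mpr (Or.inl hre)
  have hn0 : n = 0 := by
    have : |(n : ℝ)| < 1 := by
      have hπ := Real.pi_pos
      have : |2 * Real.pi * n| < 2 * Real.pi := by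
        rw [← harg]; linarith [abs_sub (arg u - arg v) (arg (u / v))]
      rw [abs_mul, abs_of_pos (by positivity)] at this
      nlinarith
    exact Int.abs_lt_one_iff.mp (by exact_mod_cast this)
  rw [hn0] at hn
  linear_combination -hn

lemma div_cpow_of_zero_le_im_iff {u v : ℂ} (hu : u ≠ 0) (hv : v ≠ 0)
    (him : 0 ≤ u.im ↔ 0 ≤ v.im) (hre : 0 < (u / v).re) (c : ℂ) :
    (u / v) ^ c = u ^ c / v ^ c := by
  rw [cpow_def_of_ne_zero hu, cpow_def_of_ne_zero hv, cpow_def_of_ne_zero (div_ne_zero hu hv),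
    ← exp_sub, ← sub_mul, log_div_of_zero_le_im_iff hu hv him hre]

lemma continuousWithinAt_cpow_const_of_ne_zero {z : ℂ} (hz : z ≠ 0) (c : ℂ) :
    ContinuousWithinAt (· ^ c) {w : ℂ | 0 ≤ w.im} z := by
  by_cases hslit : z ∈ slitPlane
  · exact (continuousAt_cpow_const hslit).continuousWithinAt
  obtain ⟨hre, him⟩ : z.re < 0 ∧ z.im = 0 := by
    rw [mem_slitPlane_iff, not_or, not_lt, not_not] at hslit
    exact ⟨hslit.1.lt_of_ne fun h => hz (ext h hslit.2), hslit.2⟩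
  refine (((continuousWithinAt_log_of_re_neg_of_im_zero hre him).mul
    continuousWithinAt_const).cexp).congr_of_eventuallyEq ?_ (cpow_def_of_ne_zero hz c)
  filter_upwards [nhdsWithin_le_nhds (isOpen_ne.mem_nhds hz)] with w hw
  exact cpow_def_of_ne_zero hw c

lemma continuousWithinAt_sub_one_cpow_const {z : ℂ} (hz : z ≠ 1) (c : ℂ) :
    ContinuousWithinAt (fun w => (w - 1) ^ c) {w : ℂ | 0 ≤ w.im} z :=
  (continuousWithinAt_cpow_const_of_ne_zero (sub_ne_zero.mpr hz) c).comp (f := (· - 1))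
    (continuousWithinAt_id.sub continuousWithinAt_const) fun w (hw : 0 ≤ w.im) => by
      simpa using hw

lemma conj_cpow_of_im_ne_zero {z c : ℂ} (hz : z.im ≠ 0) (hc : conj c = c) :
    conj z ^ c = conj (z ^ c) := by
  rw [conj_cpow z c fun h => hz (arg_eq_pi_iff.mp h).2, hc]

lemma cpow_one_half_re_nonneg_im_nonneg {z : ℂ} (hz : 0 ≤ z.im) :
    0 ≤ (z ^ (1 / 2 : ℂ)).re ∧ 0 ≤ (z ^ (1 / 2 : ℂ)).im := by
  rcases eq_or_ne z 0 with rfl | hz0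
  · simp
  have harg : (log z * (1 / 2)).im = arg z / 2 := by simp [log_im, div_eq_mul_inv]
  rw [cpow_def_of_ne_zero hz0, exp_re, exp_im, harg]
  have h0 := arg_nonneg_iff.mpr hz
  have hπ := arg_le_pi z
  exact ⟨mul_nonneg (Real.exp_pos _).le (Real.cos_nonneg_of_mem_Icc ⟨by linarith, by linarith⟩),
    mul_nonneg (Real.exp_pos _).le (Real.sin_nonneg_of_nonneg_of_le_pi (by linarith) (by linarith))⟩

lemma cpow_one_half_sq (z : ℂ) : (z ^ (1 / 2 : ℂ)) ^ 2 = z := by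
  simp [one_div]

lemma ofReal_cpow_one_half {x : ℝ} (hx : 0 ≤ x) : (x : ℂ) ^ (1 / 2 : ℂ) = (√x : ℝ) := by
  rw [Real.sqrt_eq_rpow, ofReal_cpow hx]
  norm_num

lemma ofReal_sub_one_cpow {x : ℝ} (hx : x ≤ 1) (c : ℂ) :
    ((x : ℂ) - 1) ^ c = ((1 - x : ℝ) : ℂ) ^ c * exp (Real.pi * I * c) := by
  rw [show (x : ℂ) - 1 = ((x - 1 : ℝ) : ℂ) by push_cast; ring,
    ofReal_cpow_of_nonpos (by linarith)]
  push_cast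
  ring_nf

lemma conj_ofReal_cpow {x : ℝ} (hx : 0 ≤ x) {c : ℂ} (hc : conj c = c) :
    conj ((x : ℂ) ^ c) = (x : ℂ) ^ c := by
  have harg : arg x ≠ Real.pi := by
    rw [arg_ofReal_of_nonneg hx]; exact Real.pi_ne_zero.symm
  simpa [hc] using (conj_cpow (x : ℂ) c harg).symm

end Complex

lemma tendsto_add_mul_I_of_continuousWithinAt {E : Type*} [TopologicalSpace E] {f : ℂ → E}
    {x : ℝ} (hf : ContinuousWithinAt f {z : ℂ | 0 ≤ z.im} x) :
    Tendsto (fun ε : ℝ => f (x + ε * I)) (𝓝[>] 0) (𝓝 (f x)) := by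
  refine hf.tendsto.comp (tendsto_nhdsWithin_iff.mpr ⟨?_, ?_⟩)
  · have : Continuous fun ε : ℝ => (x : ℂ) + ε * I := by fun_prop
    simpa using (this.tendsto 0).mono_left nhdsWithin_le_nhds
  · filter_upwards [self_mem_nhdsWithin] with ε (hε : 0 < ε)
    simp [hε.le]

section phiMap

lemma phiMap_ne_zero (z : ℂ) : phiMap z ≠ 0 := by
  intro h
  rw [phiMap] at h
  have hsq : (2 * z ^ (1 / 2 : ℂ) * (z - 1) ^ (1 / 2 : ℂ)) ^ 2 = (2 * (z - 1 / 2)) ^ 2 := by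
    rw [show 2 * z ^ (1 / 2 : ℂ) * (z - 1) ^ (1 / 2 : ℂ) = -(2 * (z - 1 / 2)) by
      linear_combination h]
    ring
  rw [mul_pow, mul_pow, cpow_one_half_sq, cpow_one_half_sq] at hsq
  have : (0 : ℂ) = 1 := by linear_combination hsq
  exact zero_ne_one this

lemma two_mul_im_le_im_phiMap {z : ℂ} (hz : 0 ≤ z.im) : 2 * z.im ≤ (phiMap z).im := by
  obtain ⟨hs₁, hs₂⟩ := cpow_one_half_re_nonneg_im_nonneg hz
  obtain ⟨ht₁, ht₂⟩ := cpow_one_half_re_nonneg_im_nonneg (z := z - 1) (by simpa using hz)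
  simp only [phiMap, add_im, mul_im, mul_re, sub_im, re_ofNat, im_ofNat, one_im, div_ofNat_im]
  nlinarith [mul_nonneg hs₁ ht₂, mul_nonneg hs₂ ht₁]

lemma phiMap_conj {z : ℂ} (hz : z.im ≠ 0) : phiMap (conj z) = conj (phiMap z) := by
  have hc : conj (1 / 2 : ℂ) = 1 / 2 := by rw [map_div₀, map_one, map_ofNat]
  have hz1 : (z - 1).im ≠ 0 := by simpa using hz
  rw [phiMap, phiMap, show conj z - 1 = conj (z - 1) by simp, conj_cpow_of_im_ne_zero hz hc,
    conj_cpow_of_im_ne_zero hz1 hc]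
  simp [map_ofNat]

lemma im_phiMap_le_two_mul_im {z : ℂ} (hz : z.im < 0) : (phiMap z).im ≤ 2 * z.im := by
  have h := two_mul_im_le_im_phiMap (z := conj z) (by simpa using hz.le)
  rw [phiMap_conj hz.ne, conj_im, conj_im] at h
  linarith

lemma zero_le_im_phiMap_iff {z : ℂ} : 0 ≤ (phiMap z).im ↔ 0 ≤ z.im := by
  refine ⟨fun h => not_lt.mp fun hz => ?_, fun hz => ?_⟩
  · linarith [im_phiMap_le_two_mul_im hz]
  · linarith [two_mul_im_le_im_phiMap hz]

lemma im_phiMap_ne_zero {z : ℂ} (hz : z.im ≠ 0) : (phiMap z).im ≠ 0 := by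
  rcases hz.lt_or_gt with hz | hz
  · linarith [im_phiMap_le_two_mul_im hz]
  · linarith [two_mul_im_le_im_phiMap hz.le]

lemma phiMap_ofReal {x : ℝ} (hx₀ : 0 ≤ x) (hx₁ : x ≤ 1) :
    phiMap x = (2 * x - 1 : ℝ) + (2 * √x * √(1 - x) : ℝ) * I := by
  rw [phiMap, ofReal_sub_one_cpow hx₁, ofReal_cpow_one_half hx₀,
    ofReal_cpow_one_half (by linarith), show (Real.pi : ℂ) * I * (1 / 2) = Real.pi / 2 * I by ring,
    exp_pi_div_two_mul_I]
  push_cast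
  ring

lemma norm_phiMap_ofReal {x : ℝ} (hx₀ : 0 ≤ x) (hx₁ : x ≤ 1) : ‖phiMap x‖ = 1 := by
  rw [phiMap_ofReal hx₀ hx₁, norm_def, normSq_add_mul_I, mul_pow, mul_pow,
    Real.sq_sqrt hx₀, Real.sq_sqrt (by linarith)]
  ring_nf
  exact Real.sqrt_one

lemma im_phiMap_ofReal_pos {x : ℝ} (hx₀ : 0 < x) (hx₁ : x < 1) : 0 < (phiMap x).im := by
  have := Real.sqrt_pos.mpr hx₀
  have := Real.sqrt_pos.mpr (sub_pos.mpr hx₁)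
  rw [phiMap_ofReal hx₀.le hx₁.le]
  simpa using by positivity

lemma continuousWithinAt_phiMap {z : ℂ} (hz₀ : z ≠ 0) (hz₁ : z ≠ 1) :
    ContinuousWithinAt phiMap {w : ℂ | 0 ≤ w.im} z := by
  unfold phiMap
  exact (continuousWithinAt_const.mul (continuousWithinAt_id.sub continuousWithinAt_const)).add
    ((continuousWithinAt_const.mul (continuousWithinAt_cpow_const_of_ne_zero hz₀ _)).mul
      (continuousWithinAt_sub_one_cpow_const hz₁ _))

end phiMap

section aFun

lemma aFun_ne_zero {z : ℂ} (hz₀ : z ≠ 0) (hz₁ : z ≠ 1) : aFun z ≠ 0 :=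
  div_ne_zero (by simpa [cpow_eq_zero_iff, sub_eq_zero] using hz₁)
    (by simpa [cpow_eq_zero_iff] using hz₀)

lemma continuousWithinAt_aFun {z : ℂ} (hz₀ : z ≠ 0) (hz₁ : z ≠ 1) :
    ContinuousWithinAt aFun {w : ℂ | 0 ≤ w.im} z :=
  (continuousWithinAt_sub_one_cpow_const hz₁ _).div
    (continuousWithinAt_cpow_const_of_ne_zero hz₀ _) (by simpa [cpow_eq_zero_iff] using hz₀)

lemma aFun_conj {z : ℂ} (hz : z.im ≠ 0) : aFun (conj z) = conj (aFun z) := by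
  have hc : conj (1 / 4 : ℂ) = 1 / 4 := by rw [map_div₀, map_one, map_ofNat]
  rw [aFun, aFun, show conj z - 1 = conj (z - 1) by simp, conj_cpow_of_im_ne_zero hz hc,
    conj_cpow_of_im_ne_zero (by simpa using hz) hc, map_div₀]

lemma aFun_ofReal_eq_I_mul_conj {x : ℝ} (hx₀ : 0 ≤ x) (hx₁ : x ≤ 1) :
    aFun x = I * conj (aFun x) := by
  have hc : conj (1 / 4 : ℂ) = 1 / 4 := by rw [map_div₀, map_one, map_ofNat]
  have hω : I * conj (exp (Real.pi * I * (1 / 4))) = exp (Real.pi * I * (1 / 4)) := by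
    calc I * conj (exp (Real.pi * I * (1 / 4)))
        = exp (Real.pi / 2 * I + conj (Real.pi * I * (1 / 4))) := by
          rw [exp_add, exp_pi_div_two_mul_I, exp_conj]
      _ = exp (Real.pi * I * (1 / 4)) := by
          congr 1
          simp only [map_mul, conj_ofReal, conj_I, map_div₀, map_one, map_ofNat]
          ring
  rw [aFun, ofReal_sub_one_cpow hx₁, map_div₀, map_mul, conj_ofReal_cpow (by linarith) hc,
    conj_ofReal_cpow hx₀ hc]
  linear_combination (-(((1 - x : ℝ) : ℂ) ^ (1 / 4 : ℂ) / (x : ℂ) ^ (1 / 4 : ℂ))) * hω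

end aFun

section szego

variable (α : ℝ)

lemma szego_ne_zero {z : ℂ} (hz : z ≠ 0) : szego α z ≠ 0 :=
  div_ne_zero (by simp [cpow_eq_zero_iff, hz]) (by simp [cpow_eq_zero_iff, phiMap_ne_zero z])

lemma szego_conj {z : ℂ} (hz : z.im ≠ 0) : szego α (conj z) = conj (szego α z) := by
  have hc : conj ((α : ℂ) / 2) = α / 2 := by rw [map_div₀, conj_ofReal, map_ofNat]
  rw [szego, szego, phiMap_conj hz, conj_cpow_of_im_ne_zero hz hc,
    conj_cpow_of_im_ne_zero (im_phiMap_ne_zero hz) hc, map_div₀]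

lemma continuousWithinAt_szego {x : ℝ} (hx₀ : 0 < x) (hx₁ : x < 1) :
    ContinuousWithinAt (szego α) {w : ℂ | 0 ≤ w.im} x := by
  have hx : (x : ℂ) ≠ 0 := ofReal_ne_zero.mpr hx₀.ne'
  have hφ : phiMap x ∈ slitPlane := mem_slitPlane_iff.mpr (Or.inr (im_phiMap_ofReal_pos hx₀ hx₁).ne')
  exact (continuousWithinAt_cpow_const_of_ne_zero hx _).div
    ((continuousAt_cpow_const hφ).comp_continuousWithinAt
      (continuousWithinAt_phiMap hx (by exact_mod_cast hx₁.ne)))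
    (by simp [cpow_eq_zero_iff, phiMap_ne_zero x])

lemma szego_ofReal_mul_conj {x : ℝ} (hx₀ : 0 ≤ x) (hx₁ : x ≤ 1) :
    szego α x * conj (szego α x) = (x : ℂ) ^ (α : ℂ) := by
  have hnorm : ‖szego α x‖ = x ^ (α / 2) := by
    rw [szego, norm_div, show (α : ℂ) / 2 = ((α / 2 : ℝ) : ℂ) by push_cast; ring,
      norm_cpow_real, norm_cpow_real, norm_phiMap_ofReal hx₀ hx₁, Real.one_rpow, div_one,
      norm_real, Real.norm_of_nonneg hx₀]
  rw [mul_conj, normSq_eq_norm_sq, hnorm, ← Real.rpow_natCast, ← Real.rpow_mul hx₀,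
    ofReal_cpow hx₀]
  norm_num

end szego

section cobounded

lemma tendsto_one_sub_inv_cobounded : Tendsto (fun z : ℂ => 1 - z⁻¹) (cobounded ℂ) (𝓝 1) := by
  simpa using tendsto_const_nhds.sub (tendsto_inv₀_cobounded (α := ℂ))

lemma tendsto_sub_one_cpow_div_cpow_cobounded (c : ℂ) :
    Tendsto (fun z : ℂ => (z - 1) ^ c / z ^ c) (cobounded ℂ) (𝓝 1) := by
  have hlim : Tendsto (fun z : ℂ => (1 - z⁻¹) ^ c) (cobounded ℂ) (𝓝 1) := by
    simpa [Function.comp_def] using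
      (continuousAt_cpow_const (by simp : (1 : ℂ) ∈ slitPlane)).tendsto.comp
        tendsto_one_sub_inv_cobounded
  refine hlim.congr' ?_
  have hre : ∀ᶠ z in cobounded ℂ, 0 < (1 - z⁻¹).re :=
    ((continuous_re.tendsto 1).comp tendsto_one_sub_inv_cobounded).eventually
      (eventually_gt_nhds (by simp))
  filter_upwards [hre, eventually_ne_cobounded 0] with z hre hz
  have hdiv : (z - 1) / z = 1 - z⁻¹ := by field_simp
  have hz₁ : z - 1 ≠ 0 := fun h => by simp [← hdiv, h] at hre
  rw [← hdiv, div_cpow_of_zero_le_im_iff hz₁ hz (by simp) (hdiv ▸ hre)]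

lemma tendsto_aFun_cobounded : Tendsto aFun (cobounded ℂ) (𝓝 1) :=
  tendsto_sub_one_cpow_div_cpow_cobounded _

lemma tendsto_phiMap_div_cobounded :
    Tendsto (fun z => phiMap z / z) (cobounded ℂ) (𝓝 4) := by
  have h := (tendsto_const_nhds (x := (2 : ℂ))).add
    ((tendsto_const_nhds (x := (2 : ℂ))).mul (tendsto_sub_one_cpow_div_cpow_cobounded (1 / 2)))
  have h' := h.sub (tendsto_inv₀_cobounded (α := ℂ))
  norm_num at h'
  refine h'.congr' ?_
  filter_upwards [eventually_ne_cobounded 0] with z hz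
  -- `φ(z) / z = 2 - z⁻¹ + 2 (z - 1)^{1/2} / z^{1/2}` because `(z^{1/2})² = z`
  have hs : z ^ (1 / 2 : ℂ) ≠ 0 := by simpa [cpow_eq_zero_iff] using hz
  have hsq := cpow_one_half_sq z
  rw [phiMap]
  field_simp
  linear_combination (-2 * (z - 1) ^ (1 / 2 : ℂ)) * hsq

lemma inv_four_cpow_div_two (α : ℝ) : (4⁻¹ : ℂ) ^ ((α : ℂ) / 2) = 2 ^ (-α : ℂ) := by
  have h : ((4 : ℝ)⁻¹) ^ (α / 2) = (2 : ℝ) ^ (-α) := by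
    rw [show (4 : ℝ)⁻¹ = 2 ^ (-2 : ℝ) by norm_num, ← Real.rpow_mul (by norm_num)]
    ring_nf
  have := congrArg ((↑) : ℝ → ℂ) h
  rw [ofReal_cpow (by norm_num), ofReal_cpow (by norm_num)] at this
  push_cast at this
  exact this

lemma tendsto_szego_cobounded (α : ℝ) :
    Tendsto (szego α) (cobounded ℂ) (𝓝 (2 ^ (-α : ℂ))) := by
  have hlim : Tendsto (fun z => z / phiMap z) (cobounded ℂ) (𝓝 4⁻¹) := by
    refine (tendsto_phiMap_div_cobounded.inv₀ (by norm_num)).congr fun z => ?_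
    simp
  have hre : ∀ᶠ z in cobounded ℂ, 0 < (z / phiMap z).re :=
    ((continuous_re.tendsto _).comp hlim).eventually (eventually_gt_nhds (by norm_num))
  rw [← inv_four_cpow_div_two]
  refine ((continuousAt_cpow_const (mem_slitPlane_iff.mpr (Or.inl (by norm_num)))).tendsto.comp
    hlim).congr' ?_
  filter_upwards [hre, eventually_ne_cobounded 0] with z hre hz
  exact div_cpow_of_zero_le_im_iff hz (phiMap_ne_zero z) zero_le_im_phiMap_iff.symm hre _

end cobounded

section outerMatrix

lemma tendsto_matrix_of_fin_two {ι R : Type*} [TopologicalSpace R] {l : Filter ι}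
    {f g h k : ι → R} {a b c d : R} (hf : Tendsto f l (𝓝 a)) (hg : Tendsto g l (𝓝 b))
    (hh : Tendsto h l (𝓝 c)) (hk : Tendsto k l (𝓝 d)) :
    Tendsto (fun t => !![f t, g t; h t, k t]) l (𝓝 !![a, b; c, d]) := by
  refine tendsto_pi_nhds.mpr fun i => tendsto_pi_nhds.mpr fun j => ?_
  fin_cases i <;> fin_cases j <;> simpa

variable (α : ℝ)

noncomputable def outerMatrix (a d : ℂ) : Matrix (Fin 2) (Fin 2) ℂ :=
  !![(2:ℂ) ^ (-α : ℂ), 0; 0, (2:ℂ) ^ (α : ℂ)] *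
  !![(a + a⁻¹)/2, (a - a⁻¹)/(2*I);
     -((a - a⁻¹)/(2*I)), (a + a⁻¹)/2] *
  !![d⁻¹, 0; 0, d]

lemma Pinfty_eq_outerMatrix (z : ℂ) : Pinfty α z = outerMatrix α (aFun z) (szego α z) := rfl

lemma two_cpow_neg_mul_two_cpow : (2 : ℂ) ^ (-α : ℂ) * 2 ^ (α : ℂ) = 1 := by
  rw [← cpow_add _ _ two_ne_zero, neg_add_cancel, cpow_zero]

lemma outerMatrix_eq (a d : ℂ) : outerMatrix α a d =
    !![2 ^ (-α : ℂ) * ((a + a⁻¹) / 2) * d⁻¹, 2 ^ (-α : ℂ) * ((a - a⁻¹) / (2 * I)) * d;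
       -(2 ^ (α : ℂ) * ((a - a⁻¹) / (2 * I)) * d⁻¹), 2 ^ (α : ℂ) * ((a + a⁻¹) / 2) * d] := by
  rw [outerMatrix, Matrix.mul_fin_two, Matrix.mul_fin_two]
  simp only [zero_mul, mul_zero, add_zero, zero_add, mul_neg, neg_mul, neg_zero]

lemma det_outerMatrix {a d : ℂ} (ha : a ≠ 0) (hd : d ≠ 0) : (outerMatrix α a d).det = 1 := by
  have hmid : (a + a⁻¹) / 2 * ((a + a⁻¹) / 2) - (a - a⁻¹) / (2 * I) * -((a - a⁻¹) / (2 * I)) = 1 := by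
    field_simp
    linear_combination (a ^ 2 - 1) ^ 2 * I_sq
  rw [outerMatrix, Matrix.det_mul, Matrix.det_mul, Matrix.det_fin_two_of, Matrix.det_fin_two_of,
    Matrix.det_fin_two_of, hmid, inv_mul_cancel₀ hd, two_cpow_neg_mul_two_cpow]
  ring

lemma outerMatrix_one : outerMatrix α 1 (2 ^ (-α : ℂ)) = 1 := by
  have h2 := two_cpow_neg_mul_two_cpow α
  have h2' : (2 : ℂ) ^ (-α : ℂ) ≠ 0 := left_ne_zero_of_mul_eq_one h2
  have h2c : (2 : ℂ) ^ (α : ℂ) * 2 ^ (-α : ℂ) = 1 := by rw [mul_comm, h2]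
  rw [outerMatrix_eq, Matrix.one_fin_two]
  ext i j
  fin_cases i <;> fin_cases j <;> simp [h2', h2c]

lemma outerMatrix_I_mul {a dp dm : ℂ} (hdm : dm ≠ 0) :
    outerMatrix α (I * a) dp = outerMatrix α a dm * !![0, dp * dm; -(dp * dm)⁻¹, 0] := by
  rw [outerMatrix_eq, outerMatrix_eq, Matrix.mul_fin_two]
  ext i j
  fin_cases i <;> fin_cases j <;> simp [inv_I] <;> field_simp <;> ring_nf <;> simp [I_sq]

lemma tendsto_outerMatrix {ι : Type*} {l : Filter ι} {f g : ι → ℂ} {a d : ℂ}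
    (hf : Tendsto f l (𝓝 a)) (hg : Tendsto g l (𝓝 d)) (ha : a ≠ 0) (hd : d ≠ 0) :
    Tendsto (fun t => outerMatrix α (f t) (g t)) l (𝓝 (outerMatrix α a d)) := by
  have hf' := hf.inv₀ ha
  exact (tendsto_const_nhds.mul (tendsto_matrix_of_fin_two
      ((hf.add hf').div_const 2) ((hf.sub hf').div_const _)
      ((hf.sub hf').div_const _).neg ((hf.add hf').div_const 2))).mul
    (tendsto_matrix_of_fin_two (hg.inv₀ hd) tendsto_const_nhds tendsto_const_nhds hg)

end outerMatrix

section Pinfty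

variable (α : ℝ)

lemma det_Pinfty {z : ℂ} (hz₀ : z ≠ 0) (hz₁ : z ≠ 1) : (Pinfty α z).det = 1 :=
  det_outerMatrix α (aFun_ne_zero hz₀ hz₁) (szego_ne_zero α hz₀)

lemma tendsto_Pinfty_cobounded : Tendsto (Pinfty α) (cobounded ℂ) (𝓝 1) := by
  rw [← outerMatrix_one α]
  exact tendsto_outerMatrix α tendsto_aFun_cobounded (tendsto_szego_cobounded α) one_ne_zero
    (by simp [cpow_eq_zero_iff])

variable {x : ℝ} (hx₀ : 0 < x) (hx₁ : x < 1)
include hx₀ hx₁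

lemma tendsto_Pinfty_add_mul_I :
    Tendsto (fun ε : ℝ => Pinfty α (x + ε * I)) (𝓝[>] 0) (𝓝 (Pinfty α x)) := by
  have hx : (x : ℂ) ≠ 0 := ofReal_ne_zero.mpr hx₀.ne'
  have hx' : (x : ℂ) ≠ 1 := by exact_mod_cast hx₁.ne
  exact tendsto_outerMatrix α
    (tendsto_add_mul_I_of_continuousWithinAt (continuousWithinAt_aFun hx hx'))
    (tendsto_add_mul_I_of_continuousWithinAt (continuousWithinAt_szego α hx₀ hx₁))
    (aFun_ne_zero hx hx') (szego_ne_zero α hx)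

lemma tendsto_Pinfty_sub_mul_I :
    Tendsto (fun ε : ℝ => Pinfty α (x - ε * I)) (𝓝[>] 0)
      (𝓝 (outerMatrix α (conj (aFun x)) (conj (szego α x)))) := by
  have hx : (x : ℂ) ≠ 0 := ofReal_ne_zero.mpr hx₀.ne'
  have hx' : (x : ℂ) ≠ 1 := by exact_mod_cast hx₁.ne
  refine (tendsto_outerMatrix α
    ((continuous_conj.tendsto _).comp
      (tendsto_add_mul_I_of_continuousWithinAt (continuousWithinAt_aFun hx hx')))
    ((continuous_conj.tendsto _).comp
      (tendsto_add_mul_I_of_continuousWithinAt (continuousWithinAt_szego α hx₀ hx₁)))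
    (by simpa using aFun_ne_zero hx hx') (by simpa using szego_ne_zero α hx)).congr' ?_
  filter_upwards [self_mem_nhdsWithin] with ε (hε : 0 < ε)
  have him : ((x : ℂ) + ε * I).im ≠ 0 := by simpa using hε.ne'
  rw [Function.comp_apply, Function.comp_apply, ← aFun_conj him, ← szego_conj α him]
  simp [Pinfty_eq_outerMatrix, sub_eq_add_neg]

lemma Pinfty_ofReal_eq_mul :
    Pinfty α x = outerMatrix α (conj (aFun x)) (conj (szego α x)) *
      !![0, (x : ℂ) ^ (α : ℂ); -((x : ℂ) ^ (-α : ℂ)), 0] := by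
  have hD : conj (szego α x) ≠ 0 := by simpa using szego_ne_zero α (ofReal_ne_zero.mpr hx₀.ne')
  conv_lhs => rw [Pinfty_eq_outerMatrix, aFun_ofReal_eq_I_mul_conj hx₀.le hx₁.le,
    outerMatrix_I_mul α hD, szego_ofReal_mul_conj α hx₀.le hx₁.le]
  rw [cpow_neg]

end Pinfty

theorem outer_parametrix_properties_general (α : ℝ) :
    (∀ z ∈ unitSegmentᶜ, (Pinfty α z).det = 1) ∧
    Tendsto (Pinfty α) (comap (fun z : ℂ => ‖z‖) atTop)
      (nhds (1 : Matrix (Fin 2) (Fin 2) ℂ)) ∧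
    (∀ x : ℝ, x ∈ Set.Ioo (0:ℝ) 1 → ∃ Pp Pm : Matrix (Fin 2) (Fin 2) ℂ,
      Tendsto (fun ε : ℝ => Pinfty α ((x : ℂ) + ε * Complex.I))
        (nhdsWithin 0 (Set.Ioi 0)) (nhds Pp) ∧
      Tendsto (fun ε : ℝ => Pinfty α ((x : ℂ) - ε * Complex.I))
        (nhdsWithin 0 (Set.Ioi 0)) (nhds Pm) ∧
      Pp = Pm * !![0, (x : ℂ) ^ (α : ℂ); -((x : ℂ) ^ (-α : ℂ)), 0]) := by
  refine ⟨fun z hz => det_Pinfty α ?_ ?_, comap_norm_atTop (E := ℂ) ▸ tendsto_Pinfty_cobounded α,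
    fun x hx => ⟨_, _, tendsto_Pinfty_add_mul_I α hx.1 hx.2, tendsto_Pinfty_sub_mul_I α hx.1 hx.2,
      Pinfty_ofReal_eq_mul α hx.1 hx.2⟩⟩
  · rintro rfl
    exact hz ⟨0, by simp, by simp⟩
  · rintro rfl
    exact hz ⟨1, by simp, by simp⟩

/-- `det P^{(∞)} ≡ 1` on `ℂ\[0,1]`, `P^{(∞)}(z) → I` as `z → ∞`,
and the boundary values on `(0,1)` satisfy
`P^{(∞)}₊(x) = P^{(∞)}₋(x)·[[0, x^α],[-x^{-α}, 0]]`. -/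
theorem outer_parametrix_properties (α : ℝ) (hα : -1 < α) :
    (∀ z ∈ unitSegmentᶜ, (Pinfty α z).det = 1) ∧
    Tendsto (Pinfty α) (comap (fun z : ℂ => ‖z‖) atTop)
      (nhds (1 : Matrix (Fin 2) (Fin 2) ℂ)) ∧
    (∀ x : ℝ, x ∈ Set.Ioo (0:ℝ) 1 → ∃ Pp Pm : Matrix (Fin 2) (Fin 2) ℂ,
      Tendsto (fun ε : ℝ => Pinfty α ((x : ℂ) + ε * Complex.I))
        (nhdsWithin 0 (Set.Ioi 0)) (nhds Pp) ∧
      Tendsto (fun ε : ℝ => Pinfty α ((x : ℂ) - ε * Complex.I))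
        (nhdsWithin 0 (Set.Ioi 0)) (nhds Pm) ∧
      Pp = Pm * !![0, (x : ℂ) ^ (α : ℂ); -((x : ℂ) ^ (-α : ℂ)), 0]) :=
  outer_parametrix_properties_general α
end

section
/- For z in ℂ with 0 < Re z < 1 or z off the real axis near (0,1), with arccos defined by arccos z = ∫_z^1 ds/((1−s)^{1/2}(1+s)^{1/2}) on ℂ\((−∞,−1]∪[1,∞)), the conformal map φ(z) = 2(z−1/2)+2z^{1/2}(z−1)^{1/2} satisfies φ(z) = e^{i·arccos(2z−1)} for z in the upper half-plane. -/
/-- The complex `arccos`, defined by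
`arccos w = ∫_w^1 ds/((1-s)^{1/2}(1+s)^{1/2})`, the integral taken along the
straight segment from `w` to `1`. -/
noncomputable def arccosC (w : ℂ) : ℂ :=
  (1 - w) * ∫ t in (0:ℝ)..1,
    ((1 - (w + t * (1 - w))) ^ ((1:ℂ)/2) * (1 + (w + t * (1 - w))) ^ ((1:ℂ)/2))⁻¹

open Complex MeasureTheory

namespace Complex

theorem cpow_half_sq (x : ℂ) : (x ^ (1/2 : ℂ)) ^ 2 = x := by
  rw [one_div, cpow_ofNat_inv_pow]

theorem re_cpow_half_pos {x : ℂ} (hx : x ∈ slitPlane) : 0 < (x ^ (1/2 : ℂ)).re := by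
  obtain ⟨harg, hx0⟩ := mem_slitPlane_iff_arg.mp hx
  have hlt : x.arg < Real.pi := lt_of_le_of_ne (arg_le_pi x) harg
  rw [cpow_def_of_ne_zero hx0, exp_re]
  refine mul_pos (Real.exp_pos _) (Real.cos_pos_of_mem_Ioo ⟨?_, ?_⟩) <;>
    simp [log_im] <;> linarith [neg_pi_lt_arg x]

theorem im_eq_two_mul_re_mul_im_cpow_half (x : ℂ) :
    x.im = 2 * (x ^ (1/2 : ℂ)).re * (x ^ (1/2 : ℂ)).im := by
  conv_lhs => rw [← cpow_half_sq x]
  rw [sq, mul_im]; ring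

theorem im_cpow_half_pos {x : ℂ} (hx : 0 < x.im) : 0 < (x ^ (1/2 : ℂ)).im := by
  have hre := re_cpow_half_pos (mem_slitPlane_iff.mpr (Or.inr hx.ne'))
  rw [im_eq_two_mul_re_mul_im_cpow_half] at hx
  exact pos_of_mul_pos_right hx (by positivity)

theorem im_cpow_half_neg {x : ℂ} (hx : x.im < 0) : (x ^ (1/2 : ℂ)).im < 0 := by
  have hre := re_cpow_half_pos (mem_slitPlane_iff.mpr (Or.inr hx.ne))
  rw [im_eq_two_mul_re_mul_im_cpow_half] at hx
  exact neg_of_mul_neg_right hx (by positivity)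

theorem eq_of_mul_self_eq_of_re_pos {a b : ℂ} (h : a * a = b * b) (ha : 0 < a.re)
    (hb : 0 < b.re) : a = b := by
  refine (mul_self_eq_mul_self_iff.mp h).resolve_right fun hab => ?_
  rw [hab, neg_re] at ha
  linarith

theorem cpow_half_eq_I_mul_cpow_half_neg {x : ℂ} (hx : 0 < x.im) :
    x ^ (1/2 : ℂ) = I * (-x) ^ (1/2 : ℂ) := by
  refine eq_of_mul_self_eq_of_re_pos ?_
    (re_cpow_half_pos (mem_slitPlane_iff.mpr (Or.inr hx.ne'))) ?_
  · rw [← sq, cpow_half_sq, mul_mul_mul_comm, ← sq, ← sq, cpow_half_sq, I_sq]; ring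
  · simpa using im_cpow_half_neg (x := -x) (by simpa using hx)

theorem ofReal_mul_cpow {r : ℝ} (hr : 0 ≤ r) (x c : ℂ) :
    ((r : ℂ) * x) ^ c = (r : ℂ) ^ c * x ^ c := by
  rcases hr.eq_or_lt with rfl | hr
  · rcases eq_or_ne c 0 with rfl | hc <;> simp [*]
  rcases eq_or_ne x 0 with rfl | hx
  · rcases eq_or_ne c 0 with rfl | hc <;> simp [*]
  rw [cpow_def_of_ne_zero (mul_ne_zero (ofReal_ne_zero.mpr hr.ne') hx),
    cpow_def_of_ne_zero (ofReal_ne_zero.mpr hr.ne'), cpow_def_of_ne_zero hx, log_ofReal_mul hr hx,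
    ← ofReal_log hr.le, add_mul, exp_add]

theorem hasDerivAt_cpow_half {x : ℂ} (hx : x ∈ slitPlane) :
    HasDerivAt (· ^ (1/2 : ℂ)) (1 / (2 * x ^ (1/2 : ℂ))) x := by
  have hx0 := slitPlane_ne_zero hx
  have hsqrt : x ^ (1/2 : ℂ) ≠ 0 := by simp [cpow_eq_zero_iff, hx0]
  refine (hasStrictDerivAt_cpow_const (c := 1/2) hx).hasDerivAt.congr_deriv ?_
  rw [cpow_sub _ _ hx0, cpow_one]
  field_simp
  rw [cpow_half_sq]

end Complex

noncomputable def sqrtOneSubSq (s : ℂ) : ℂ :=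
  (1 - s) ^ (1/2 : ℂ) * (1 + s) ^ (1/2 : ℂ)

noncomputable def expIArccos (s : ℂ) : ℂ :=
  s + I * sqrtOneSubSq s

theorem re_sqrtOneSubSq_pos {s : ℂ} (hs : 0 < s.im) : 0 < (sqrtOneSubSq s).re := by
  have hu := im_cpow_half_neg (x := 1 - s) (by simpa using hs)
  have hv := im_cpow_half_pos (x := 1 + s) (by simpa using hs)
  have hu' := re_cpow_half_pos (x := 1 - s) (mem_slitPlane_iff.mpr (Or.inr (by simpa using hs.ne')))
  have hv' := re_cpow_half_pos (x := 1 + s) (mem_slitPlane_iff.mpr (Or.inr (by simpa using hs.ne')))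
  rw [sqrtOneSubSq, mul_re]
  nlinarith

theorem im_expIArccos_pos {s : ℂ} (hs : 0 < s.im) : 0 < (expIArccos s).im := by
  have := re_sqrtOneSubSq_pos hs
  simp only [expIArccos, add_im, I_mul_im]
  linarith

theorem expIArccos_one : expIArccos 1 = 1 := by
  simp [expIArccos, sqrtOneSubSq]

theorem continuousAt_expIArccos {s : ℂ} (hs : s.im ≠ 0 ∨ s.re ∈ Set.Icc (-1) 1) :
    ContinuousAt expIArccos s := by
  have half_re_pos : 0 < (1/2 : ℂ).re := by norm_num
  have hu : ContinuousAt (fun s : ℂ => (1 - s) ^ (1/2 : ℂ)) s :=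
    (continuousAt_cpow_const_of_re_pos (by
      rcases hs with h | h
      · exact Or.inr (by simpa using h)
      · exact Or.inl (by simp; linarith [h.2])) half_re_pos).comp
      (continuousAt_const.sub continuousAt_id)
  have hv : ContinuousAt (fun s : ℂ => (1 + s) ^ (1/2 : ℂ)) s :=
    (continuousAt_cpow_const_of_re_pos (by
      rcases hs with h | h
      · exact Or.inr (by simpa using h)
      · exact Or.inl (by simp; linarith [h.1]))
      half_re_pos).comp (continuousAt_const.add continuousAt_id)
  exact continuousAt_id.add (continuousAt_const.mul (hu.mul hv))

theorem hasDerivAt_sqrtOneSubSq {s : ℂ} (h₁ : 1 - s ∈ slitPlane) (h₂ : 1 + s ∈ slitPlane) :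
    HasDerivAt sqrtOneSubSq (-s / sqrtOneSubSq s) s := by
  have hu := ((hasDerivAt_cpow_half h₁).comp s ((hasDerivAt_id s).const_sub 1))
  have hv := ((hasDerivAt_cpow_half h₂).comp s ((hasDerivAt_id s).const_add 1))
  have hu0 : (1 - s) ^ (1/2 : ℂ) ≠ 0 := by simp [cpow_eq_zero_iff, slitPlane_ne_zero h₁]
  have hv0 : (1 + s) ^ (1/2 : ℂ) ≠ 0 := by simp [cpow_eq_zero_iff, slitPlane_ne_zero h₂]
  refine (hu.mul hv).congr_deriv ?_
  simp only [sqrtOneSubSq, Function.comp_def]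
  field_simp
  linear_combination cpow_half_sq (1 - s) - cpow_half_sq (1 + s)

theorem hasDerivAt_I_mul_log_expIArccos {s : ℂ} (hs : 0 < s.im) :
    HasDerivAt (fun s => I * log (expIArccos s)) (sqrtOneSubSq s)⁻¹ s := by
  have hP : sqrtOneSubSq s ≠ 0 := fun h => by simpa [h] using re_sqrtOneSubSq_pos hs
  have hE : expIArccos s ≠ 0 := fun h => by simpa [h] using im_expIArccos_pos hs
  have hderiv : HasDerivAt expIArccos (1 + I * (-s / sqrtOneSubSq s)) s :=
    (hasDerivAt_id s).add <| (hasDerivAt_sqrtOneSubSq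
      (mem_slitPlane_iff.mpr (Or.inr (by simpa using hs.ne')))
      (mem_slitPlane_iff.mpr (Or.inr (by simpa using hs.ne')))).const_mul I
  refine ((hderiv.clog (mem_slitPlane_iff.mpr (Or.inr (im_expIArccos_pos hs).ne'))).const_mul
    I).congr_deriv ?_
  rw [expIArccos] at hE ⊢
  field_simp
  linear_combination (-s) * I_sq

theorem im_segment (w : ℂ) (t : ℝ) : (w + t * (1 - w)).im = (1 - t) * w.im := by
  simp; ring

theorem one_sub_segment (w : ℂ) (t : ℝ) :
    1 - (w + t * (1 - w)) = ((1 - t : ℝ) : ℂ) * (1 - w) := by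
  push_cast; ring

section Segment

variable {w : ℂ}

theorem segment_im_pos_or_eq_one (hw : 0 < w.im) {t : ℝ} (ht : t ∈ Set.Icc 0 1) :
    0 < (w + t * (1 - w)).im ∨ w + t * (1 - w) = 1 := by
  rcases ht.2.lt_or_eq with ht | rfl
  · exact Or.inl (by rw [im_segment]; exact mul_pos (by linarith) hw)
  · exact Or.inr (by push_cast; ring)

theorem continuousOn_I_mul_log_expIArccos_segment (hw : 0 < w.im) :
    ContinuousOn (fun t : ℝ => I * log (expIArccos (w + t * (1 - w)))) (Set.Icc 0 1) := by
  intro t ht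
  refine (ContinuousAt.comp (g := fun s => I * log (expIArccos s)) ?_
    (by fun_prop)).continuousWithinAt
  rcases segment_im_pos_or_eq_one hw ht with h | h
  · exact (hasDerivAt_I_mul_log_expIArccos h).continuousAt
  · rw [h]
    refine continuousAt_const.mul ((continuousAt_expIArccos (Or.inr (by simp))).clog ?_)
    simp [expIArccos_one]

theorem intervalIntegrable_inv_sqrtOneSubSq_segment (hw : 0 < w.im) :
    IntervalIntegrable (fun t : ℝ => (sqrtOneSubSq (w + t * (1 - w)))⁻¹) volume 0 1 := by
  have hslit : ∀ t ∈ Set.Icc (0 : ℝ) 1, 1 + (w + t * (1 - w)) ∈ slitPlane := by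
    intro t ht
    rcases segment_im_pos_or_eq_one hw ht with h | h
    · exact mem_slitPlane_iff.mpr (Or.inr (by simpa using h.ne'))
    · rw [h]; norm_num
  have hw1 : 1 - w ≠ 0 := by
    rw [sub_ne_zero]; rintro rfl; simp at hw
  have hsing : IntervalIntegrable (fun t : ℝ => ((1 - t : ℝ) : ℂ) ^ (-(1/2) : ℂ))
      volume 0 1 := by
    simpa using (intervalIntegral.intervalIntegrable_cpow' (r := -(1/2)) (a := 1) (b := 0)
      (by norm_num)).comp_sub_left 1
  have hcont : ContinuousOn
      (fun t : ℝ => ((1 - w) ^ (1/2 : ℂ) * (1 + (w + t * (1 - w))) ^ (1/2 : ℂ))⁻¹)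
      (Set.uIcc 0 1) := by
    rw [Set.uIcc_of_le zero_le_one]
    refine ContinuousOn.inv₀ (continuousOn_const.mul ?_) fun t ht => ?_
    · exact ContinuousOn.cpow_const (by fun_prop) hslit
    · simp [cpow_eq_zero_iff, hw1, slitPlane_ne_zero (hslit t ht)]
  refine (intervalIntegrable_congr_uIoo fun t ht => ?_).mpr (hsing.mul_continuousOn hcont)
  rw [Set.uIoo_of_le zero_le_one] at ht
  simp only [sqrtOneSubSq, one_sub_segment, ofReal_mul_cpow (sub_nonneg.mpr ht.2.le), cpow_neg,
    mul_inv, mul_assoc]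

theorem hasDerivAt_I_mul_log_expIArccos_segment (hw : 0 < w.im) {t : ℝ} (ht : t < 1) :
    HasDerivAt (fun t : ℝ => I * log (expIArccos (w + t * (1 - w))))
      ((1 - w) * (sqrtOneSubSq (w + t * (1 - w)))⁻¹) t := by
  have hγ : HasDerivAt (fun s : ℂ => w + s * (1 - w)) (1 - w) t := by
    simpa using ((hasDerivAt_id (t : ℂ)).mul_const (1 - w)).const_add w
  have him : 0 < (w + t * (1 - w)).im := by
    rw [im_segment]; exact mul_pos (by linarith) hw
  simpa [mul_comm] using ((hasDerivAt_I_mul_log_expIArccos him).comp (t : ℂ) hγ).comp_ofReal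

theorem arccosC_eq_neg_I_mul_log (hw : 0 < w.im) : arccosC w = -(I * log (expIArccos w)) := by
  have hftc := intervalIntegral.integral_eq_sub_of_hasDerivAt_of_le zero_le_one
    (continuousOn_I_mul_log_expIArccos_segment hw)
    (fun t ht => hasDerivAt_I_mul_log_expIArccos_segment hw ht.2)
    ((intervalIntegrable_inv_sqrtOneSubSq_segment hw).const_mul (1 - w))
  simp only [sqrtOneSubSq] at hftc
  rw [arccosC, ← intervalIntegral.integral_const_mul, hftc]
  simp [expIArccos_one]

end Segment

theorem exp_I_mul_arccosC {w : ℂ} (hw : 0 < w.im) : exp (I * arccosC w) = expIArccos w := by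
  rw [arccosC_eq_neg_I_mul_log hw, mul_neg, ← mul_assoc, I_mul_I, neg_one_mul, neg_neg,
    exp_log fun h => by simpa [h] using im_expIArccos_pos hw]

theorem phiMap_eq_expIArccos {z : ℂ} (hz : 0 < z.im) : phiMap z = expIArccos (2 * z - 1) := by
  have h2 : (0 : ℝ) ≤ 2 := zero_le_two
  have hsq2 : (2 : ℂ) ^ (1/2 : ℂ) * 2 ^ (1/2 : ℂ) = 2 := by rw [← sq, cpow_half_sq]
  have e₁ : 1 - (2 * z - 1) = ((2 : ℝ) : ℂ) * (1 - z) := by push_cast; ring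
  have e₂ : 1 + (2 * z - 1) = ((2 : ℝ) : ℂ) * z := by push_cast; ring
  rw [expIArccos, sqrtOneSubSq, e₁, e₂, ofReal_mul_cpow h2, ofReal_mul_cpow h2, ofReal_ofNat,
    phiMap, cpow_half_eq_I_mul_cpow_half_neg (x := z - 1) (by simpa using hz), neg_sub]
  linear_combination -(I * (1 - z) ^ (1/2 : ℂ) * z ^ (1/2 : ℂ)) * hsq2

/-- for `z` in the upper half-plane,
`φ(z) = e^{i arccos(2z - 1)}`. -/
theorem phiMap_eq_exp_arccos (z : ℂ) (hz : 0 < z.im) :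
    phiMap z = Complex.exp (Complex.I * arccosC (2 * z - 1)) := by
  rw [exp_I_mul_arccosC (by simpa using hz), phiMap_eq_expIArccos hz]
end
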